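/- Under the gluing hypotheses (1)–(3), suppose also that for each w ∈ W there is a bounded operator M^w on U^w and a bounded operator M^w₀ on U^w₀, and that z ∈ ℂ and complex numbers φ₀, φ₁ are such that for every w: Q^w − z is invertible on U^w₁ and P^w₀M^wP^w₀ − z·P^w₀ − P^w₀M^wP^w₁(Q^w − z)⁻¹P^w₁M^wP^w₀ = φ₀·M^w₀ − φ₁·P^w₀ (as operators on U^w, with M^w₀ regarded as an operator on U^w₀ extended by zero). Then, setting M = Σ_w L^w M^w R^w and M₀ = Σ_w L^w M^w₀ R^w, the glued operators satisfy the same Schur-complement identity: P₀MP₀ − z·P₀ − P₀MP₁(Q − z)⁻¹P₁MP₀ = φ₀·M₀ − φ₁·P₀, where Q = P₁MP₁ restricted to U₁ (which is invertible after subtracting z). -/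

import Mathlib

/-!
Write `glue A = ∑ w, L^w ∘ A^w ∘ R^w` for a family of operators `A^w` on the pieces. Gluing
hypothesis (1) lets `P₀`, `P₁` pass through `glue`, becoming `P^w₀`, `P^w₁` on each piece, and
gluing hypothesis (2) makes `glue` multiplicative across a `P₁`:
`glue A ∘ P₁ ∘ glue B = glue (A ∘ P^w₁ ∘ B)`. Hence `glue B` is a right inverse of `Q − z` on
`U₁`, so it equals the left inverse `T`, and each term of the glued Schur complement is the
glue of the corresponding local terms, to which the local identities apply one piece at a time.
-/

open ContinuousLinearMap

section Glue

variable {𝕜 : Type*} [NontriviallyNormedField 𝕜]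
  {E : Type*} [NormedAddCommGroup E] [NormedSpace 𝕜 E]
  {ι : Type*} [Fintype ι] {V : ι → Type*} [∀ i, NormedAddCommGroup (V i)]
  [∀ i, NormedSpace 𝕜 (V i)]
  (L : ∀ i, V i →L[𝕜] E) (R : ∀ i, E →L[𝕜] V i)

def glue (A : ∀ i, V i →L[𝕜] V i) : E →L[𝕜] E :=
  ∑ i, L i ∘L A i ∘L R i

theorem glue_sub (A B : ∀ i, V i →L[𝕜] V i) :
    glue L R (fun i => A i - B i) = glue L R A - glue L R B := by
  simp only [glue, sub_comp, comp_sub, Finset.sum_sub_distrib]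

theorem glue_smul (c : 𝕜) (A : ∀ i, V i →L[𝕜] V i) :
    glue L R (fun i => c • A i) = c • glue L R A := by
  simp only [glue, smul_comp, comp_smul, Finset.smul_sum]

variable {L R}

theorem comp_glue {P : E →L[𝕜] E} {Q : ∀ i, V i →L[𝕜] V i}
    (h : ∀ i, P ∘L L i = L i ∘L Q i) (A : ∀ i, V i →L[𝕜] V i) :
    P ∘L glue L R A = glue L R (fun i => Q i ∘L A i) := by
  simp only [glue, comp_finsetSum, ← comp_assoc, h]

theorem glue_comp {P : E →L[𝕜] E} {Q : ∀ i, V i →L[𝕜] V i}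
    (h : ∀ i, R i ∘L P = Q i ∘L R i) (A : ∀ i, V i →L[𝕜] V i) :
    glue L R A ∘L P = glue L R (fun i => A i ∘L Q i) := by
  simp only [glue, finsetSum_comp, comp_assoc, h]

theorem glue_comp_comp_glue {P : E →L[𝕜] E} {Q : ∀ i, V i →L[𝕜] V i}
    (hdiag : ∀ i, R i ∘L P ∘L L i = Q i) (hoff : ∀ i j, j ≠ i → R j ∘L P ∘L L i = 0)
    (A B : ∀ i, V i →L[𝕜] V i) :
    glue L R A ∘L P ∘L glue L R B = glue L R (fun i => A i ∘L Q i ∘L B i) := by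
  calc glue L R A ∘L P ∘L glue L R B
      = ∑ j, ∑ i, (L i ∘L A i) ∘L (R i ∘L P ∘L L j) ∘L (B j ∘L R j) := by
        simp only [glue, finsetSum_comp, comp_finsetSum, comp_assoc]
    _ = ∑ j, (L j ∘L A j) ∘L (R j ∘L P ∘L L j) ∘L (B j ∘L R j) :=
        Finset.sum_congr rfl fun j _ => Finset.sum_eq_single j
          (fun i _ hij => by rw [hoff j i hij, zero_comp, comp_zero])
          (fun hj => absurd (Finset.mem_univ j) hj)
    _ = glue L R (fun i => A i ∘L Q i ∘L B i) := by
        simp only [glue, hdiag, comp_assoc]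

end Glue

theorem stmt3
    {U : Type*} [NormedAddCommGroup U] [InnerProductSpace ℂ U]
    {W : Type*} [Fintype W]
    -- orthogonal decomposition U = U₀ ⊕ U₁ via orthogonal projections P₀, P₁
    (P₀ P₁ : U →L[ℂ] U)
    -- the closed subspaces U^w, invariant under P₀ and P₁
    (Uw : W → Submodule ℂ U)
    -- the projections P^w₀, P^w₁ of U^w onto U^w₀, U^w₁ (the restrictions of P₀, P₁)
    (Pw0 Pw1 : (w : W) → Uw w →L[ℂ] Uw w)
    -- the gluing operators
    (Lw : (w : W) → Uw w →L[ℂ] U) (Rw : (w : W) → U →L[ℂ] Uw w)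
    -- gluing hypothesis (1)
    (h1a : ∀ w, P₀ ∘L Lw w = Lw w ∘L Pw0 w) (h1b : ∀ w, Rw w ∘L P₀ = Pw0 w ∘L Rw w)
    (h1c : ∀ w, P₁ ∘L Lw w = Lw w ∘L Pw1 w)
    -- gluing hypothesis (2)
    (h2a : ∀ w, Rw w ∘L P₁ ∘L Lw w = Pw1 w)
    (h2b : ∀ w w', w' ≠ w → Rw w' ∘L P₁ ∘L Lw w = 0)
    -- gluing hypothesis (3)
    (h3a : ∑ w, Lw w ∘L Pw0 w ∘L Rw w = P₀)
    (h3b : ∑ w, Lw w ∘L Pw1 w ∘L Rw w = P₁)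
    -- the operators M^w, M^w₀, the point z and the constants φ₀, φ₁
    (Mw : (w : W) → Uw w →L[ℂ] Uw w)
    (Mw0 : (w : W) → Uw w →L[ℂ] Uw w)
    (z φ₀ φ₁ : ℂ)
    -- for each w, Q^w − z = P^w₁ M^w P^w₁ − z is invertible on U^w₁, with inverse B^w
    (Bw : (w : W) → Uw w →L[ℂ] Uw w)
    (hBw1 : ∀ w, (Pw1 w ∘L Mw w ∘L Pw1 w - z • Pw1 w) ∘L Bw w = Pw1 w)
    (hBw3 : ∀ w, Pw1 w ∘L Bw w = Bw w)
    -- the Schur-complement identity for each M^w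
    (hSchur : ∀ w,
      Pw0 w ∘L Mw w ∘L Pw0 w - z • Pw0 w -
          Pw0 w ∘L Mw w ∘L Pw1 w ∘L Bw w ∘L Pw1 w ∘L Mw w ∘L Pw0 w =
        φ₀ • Mw0 w - φ₁ • Pw0 w)
    -- the glued operators
    (M M₀ : U →L[ℂ] U)
    (hM : M = ∑ w, Lw w ∘L Mw w ∘L Rw w)
    (hM₀ : M₀ = ∑ w, Lw w ∘L Mw0 w ∘L Rw w) :
    ∀ T : U →L[ℂ] U,
      (P₁ ∘L M ∘L P₁ - z • P₁) ∘L T = P₁ →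
      T ∘L (P₁ ∘L M ∘L P₁ - z • P₁) = P₁ →
      P₁ ∘L T = T → T ∘L P₁ = T →
      P₀ ∘L M ∘L P₀ - z • P₀ - P₀ ∘L M ∘L P₁ ∘L T ∘L P₁ ∘L M ∘L P₀ =
        φ₀ • M₀ - φ₁ • P₀ := by
  intro T _ hT2 _ hT4
  change M = glue Lw Rw Mw at hM
  change M₀ = glue Lw Rw Mw0 at hM₀
  change glue Lw Rw Pw0 = P₀ at h3a
  change glue Lw Rw Pw1 = P₁ at h3b
  have hP₁B : P₁ ∘L glue Lw Rw Bw = glue Lw Rw Bw := by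
    rw [comp_glue h1c]
    simp only [hBw3]
  have hQB : (P₁ ∘L M ∘L P₁ - z • P₁) ∘L glue Lw Rw Bw = P₁ := by
    rw [sub_comp, smul_comp, comp_assoc, comp_assoc, hM, glue_comp_comp_glue h2a h2b, hP₁B,
      comp_glue h1c, ← glue_smul, ← glue_sub, ← h3b]
    congr 1
    funext w
    simpa only [sub_comp, smul_comp, comp_assoc, hBw3] using hBw1 w
  have hTB : T = glue Lw Rw Bw := by
    rw [← hT4, ← hQB, ← comp_assoc, hT2, hP₁B]
  have hsmulP₀ : ∀ c : ℂ, c • P₀ = glue Lw Rw (fun w => c • Pw0 w) := by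
    intro c
    rw [glue_smul, h3a]
  have hLHS : P₀ ∘L M ∘L P₀ - z • P₀ - P₀ ∘L M ∘L P₁ ∘L T ∘L P₁ ∘L M ∘L P₀ =
      glue Lw Rw (fun w => Pw0 w ∘L Mw w ∘L Pw0 w - z • Pw0 w -
        Pw0 w ∘L Mw w ∘L Pw1 w ∘L Bw w ∘L Pw1 w ∘L Mw w ∘L Pw0 w) := by
    rw [hTB, hM, glue_comp h1b, glue_comp_comp_glue h2a h2b, glue_comp_comp_glue h2a h2b,
      comp_glue h1a, comp_glue h1a, hsmulP₀, ← glue_sub, ← glue_sub]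
  rw [hLHS, hM₀, hsmulP₀, ← glue_smul, ← glue_sub]
  simp only [hSchur]
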